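/- Let H be a complex Hilbert space, k a natural number with 0 < k < dim H, and let φ : B(H) → B(H) be a positive unital linear map which maps the set of rank-k orthogonal projections in B(H) onto itself. Then every rank-1 orthogonal projection in B(H) lies in the image of φ; more precisely, for each rank-1 projection p there is a self-adjoint operator a (a real linear combination of k+1 rank-k projections) with φ(a) = p. -/

import Mathlib

variable {H : Type*} [NormedAddCommGroup H] [InnerProductSpace ℂ H] [CompleteSpace H]

/-- `P` is an orthogonal projection of rank `k` on `H`. -/
def IsRankProj (k : ℕ) (P : H →L[ℂ] H) : Prop :=
  IsSelfAdjoint P ∧ P * P = P ∧ Module.rank ℂ (LinearMap.range (P : H →ₗ[ℂ] H)) = k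

/-! Write `p = |u⟩⟨u|` and extend `u = e₀` to an orthonormal family `e₀, …, e_k`. The operators
`R_j = ∑_{i ≠ j} |eᵢ⟩⟨eᵢ|` are rank-`k` projections, hence of the form `φ Q_j` with `Q_j` a rank-`k`
projection, and since `∑_j R_j = k ∑_i |eᵢ⟩⟨eᵢ|` we get `|e₀⟩⟨e₀| = (1/k) ∑_j R_j - R₀`. So
`p = φ (∑_j c_j Q_j)` with `c_j = 1/k - δ_{j0}`. -/

open InnerProductSpace (rankOne)

theorem isRankProj_starProjection (K : Submodule ℂ H) [FiniteDimensional ℂ K] :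
    IsRankProj (Module.finrank ℂ K) K.starProjection :=
  ⟨isSelfAdjoint_starProjection K, K.isIdempotentElem_starProjection,
    by rw [Module.finrank_eq_rank]
       exact congrArg (fun S : Submodule ℂ H ↦ Module.rank ℂ S) K.range_starProjection⟩

theorem IsRankProj.exists_eq_rankOne {p : H →L[ℂ] H} (hp : IsRankProj 1 p) :
    ∃ u : H, ‖u‖ = 1 ∧ p = rankOne ℂ u u := by
  obtain ⟨hsa, hidem, hrank⟩ := hp
  have hfin : Module.finrank ℂ p.range = 1 := Module.finrank_eq_of_rank_eq hrank
  have : FiniteDimensional ℂ p.range := .of_finrank_eq_succ hfin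
  obtain ⟨_, hp⟩ := isStarProjection_iff_eq_starProjection_range.mp ⟨hidem, hsa⟩
  let b := (stdOrthonormalBasis ℂ p.range).reindex (finCongr hfin)
  refine ⟨b 0, b.orthonormal.1 0, hp.trans ?_⟩
  rw [b.starProjection_eq_sum_rankOne, Fin.sum_univ_one]

theorem Orthonormal.isRankProj_sum_rankOne {ι : Type*} {e : ι → H} (he : Orthonormal ℂ e)
    (s : Finset ι) : IsRankProj s.card (∑ i ∈ s, rankOne ℂ (e i) (e i)) := by
  classical
  have hcard : Module.finrank ℂ (Submodule.span ℂ (s.image e : Set H)) = s.card := by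
    rw [Module.finrank_eq_card_basis (OrthonormalBasis.span he s).toBasis, Fintype.card_coe]
  have hsum := (OrthonormalBasis.span he s).starProjection_eq_sum_rankOne
  simp only [OrthonormalBasis.span_apply] at hsum
  rw [← Finset.sum_coe_sort s, ← hsum, ← hcard]
  exact isRankProj_starProjection _

theorem exists_linearIndependent_fin_succ {K V : Type*} [DivisionRing K] [AddCommGroup V]
    [Module K V] {k : ℕ} (hk : (k : Cardinal) < Module.rank K V) {u : V} (hu : u ≠ 0) :
    ∃ f : Fin (k + 1) → V, LinearIndependent K f ∧ f 0 = u := by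
  induction k with
  | zero => exact ⟨![u], .of_subsingleton (ι := Fin 1) 0 hu, rfl⟩
  | succ k ih =>
    obtain ⟨f, hf, hf0⟩ := ih ((Nat.cast_lt.mpr k.lt_succ_self).trans hk)
    obtain ⟨x, hx⟩ := exists_linearIndependent_snoc_of_lt_rank hf (by exact_mod_cast hk)
    exact ⟨Fin.snoc f x, hx, by simpa using hf0⟩

theorem exists_orthonormal_fin_succ {𝕜 E : Type*} [RCLike 𝕜] [NormedAddCommGroup E]
    [InnerProductSpace 𝕜 E] {k : ℕ} (hk : (k : Cardinal) < Module.rank 𝕜 E) {u : E}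
    (hu : ‖u‖ = 1) : ∃ e : Fin (k + 1) → E, Orthonormal 𝕜 e ∧ e 0 = u := by
  obtain ⟨f, hf, rfl⟩ := exists_linearIndependent_fin_succ (u := u) hk (by rintro rfl; simp at hu)
  refine ⟨InnerProductSpace.gramSchmidtNormed 𝕜 f,
    InnerProductSpace.gramSchmidtNormed_orthonormal hf, ?_⟩
  rw [InnerProductSpace.gramSchmidtNormed, ← bot_eq_zero, InnerProductSpace.gramSchmidt_bot,
    bot_eq_zero, hu, RCLike.ofReal_one, inv_one, one_smul]

theorem sum_smul_sum_erase_eq {K M : Type*} [Field K] [CharZero K] [AddCommGroup M] [Module K M]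
    {n : ℕ} (hn : n ≠ 0) (T : Fin (n + 1) → M) (j₀ : Fin (n + 1)) :
    ∑ j, ((n : K)⁻¹ - if j = j₀ then 1 else 0) • ∑ i ∈ Finset.univ.erase j, T i = T j₀ := by
  simp only [Finset.sum_erase_eq_sub (Finset.mem_univ _), smul_sub, sub_smul,
    Finset.sum_sub_distrib, ← Finset.sum_smul, ite_smul, one_smul, zero_smul,
    Finset.sum_ite_eq', Finset.mem_univ, if_true, Finset.sum_const, Finset.card_univ,
    Fintype.card_fin, ← Finset.smul_sum]
  rw [nsmul_eq_mul]
  have : ((n + 1 : ℕ) : K) * (n : K)⁻¹ = (n : K)⁻¹ + 1 := by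
    field_simp; push_cast; ring
  rw [this, add_smul, one_smul]
  abel

theorem rank_one_proj_mem_image_general
    (k : ℕ) (hk : 0 < k) (hkdim : (k : Cardinal) < Module.rank ℂ H)
    (φ : (H →L[ℂ] H) →ₗ[ℂ] (H →L[ℂ] H))
    (honto : φ '' {P | IsRankProj k P} = {P | IsRankProj k P}) :
    ∀ p : H →L[ℂ] H, IsRankProj 1 p →
      ∃ (a : H →L[ℂ] H) (c : Fin (k + 1) → ℝ) (P : Fin (k + 1) → (H →L[ℂ] H)),
        IsSelfAdjoint a ∧
        (∀ j, IsRankProj k (P j)) ∧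
        a = ∑ j, ((c j : ℂ)) • P j ∧
        φ a = p := by
  intro p hp
  obtain ⟨u, hu, rfl⟩ := hp.exists_eq_rankOne
  obtain ⟨e, he, rfl⟩ := exists_orthonormal_fin_succ hkdim hu
  have hR (j : Fin (k + 1)) :
      IsRankProj k (∑ i ∈ Finset.univ.erase j, rankOne ℂ (e i) (e i)) := by
    simpa using he.isRankProj_sum_rankOne (Finset.univ.erase j)
  choose Q hQ hφQ using fun j ↦ honto.symm.subset (hR j)
  let c (j : Fin (k + 1)) : ℝ := (k : ℝ)⁻¹ - if j = 0 then 1 else 0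
  refine ⟨∑ j, (c j : ℂ) • Q j, c, Q, ?_, hQ, rfl, ?_⟩
  · exact isSelfAdjoint_sum _ fun j _ ↦ IsSelfAdjoint.smul (Complex.conj_ofReal (c j)) (hQ j).1
  · simp only [map_sum, LinearMap.map_smul, hφQ]
    simp only [Complex.coe_smul]
    exact sum_smul_sum_erase_eq hk.ne' _ 0

theorem rank_one_proj_mem_image
    (k : ℕ) (hk : 0 < k) (hkdim : (k : Cardinal) < Module.rank ℂ H)
    (φ : (H →L[ℂ] H) →ₗ[ℂ] (H →L[ℂ] H))
    (hpos : ∀ a : H →L[ℂ] H, a.IsPositive → (φ a).IsPositive)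
    (hunital : φ 1 = 1)
    (honto : φ '' {P | IsRankProj k P} = {P | IsRankProj k P}) :
    ∀ p : H →L[ℂ] H, IsRankProj 1 p →
      ∃ (a : H →L[ℂ] H) (c : Fin (k + 1) → ℝ) (P : Fin (k + 1) → (H →L[ℂ] H)),
        IsSelfAdjoint a ∧
        (∀ j, IsRankProj k (P j)) ∧
        a = ∑ j, ((c j : ℂ)) • P j ∧
        φ a = p :=
  rank_one_proj_mem_image_general k hk hkdim φ honto
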